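/- C₀(C₁(C₂(C₃(C₄(C₅(C₆(C₇(1)))))))) > ack 6 (ack 4 (ack 4 254)) (the paper's computation C̃₀₈(1) > F₆(F₄(F₄(254)))). -/

import Mathlib

def C0 (m : ℕ) : ℕ := 2 ^ m
def C1 (m : ℕ) : ℕ := 2 ^ m

def C2 : ℕ → ℕ
  | 0 => 0
  | m + 1 => C2 m + 2 ^ (C2 m)

def C3 (m : ℕ) : ℕ := 2 ^ m

def C4 : ℕ → ℕ
  | 0 => 0
  | 1 => 8
  | m + 2 => C4 (m + 1) + C1 (C2 (C3 (C4 (m + 1)))) - 1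

def C5 : ℕ → ℕ
  | 0 => 0
  | 1 => 2
  | m + 2 => C5 (m + 1) + C3 (C4 (C5 (m + 1)))

def C6 (m : ℕ) : ℕ := 2 ^ m

def C7 : ℕ → ℕ
  | 0 => 0
  | m + 1 => C7 m + C1 (C2 (C3 (C4 (C5 (C6 (C7 m)))))) - 8

def C8 (m : ℕ) : ℕ := 2 ^ m

def H (n : ℕ) : ℕ := C1 (C2 (C3 (C4 (C5 n))))
def G (n : ℕ) : ℕ := C1 (C2 (C3 (C4 (C5 (C6 (C7 (C8 n)))))))

def C9 : ℕ → ℕ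
  | 0 => 0
  | 1 => G (H 1 - 8) - 8
  | m + 2 => C9 (m + 1) + G (C9 (m + 1)) - H 1

def C10 : ℕ → ℕ
  | 0 => 0
  | m + 1 => C10 m + C3 (C4 (C5 (C6 (C7 (C8 (C9 (C10 m)))))))

/-! ### Auxiliary material -/

def tw : ℕ → ℕ
  | 0 => 1
  | n + 1 => 2 ^ tw n

lemma tw_succ (n : ℕ) : tw (n + 1) = 2 ^ tw n := rfl

lemma tw_pos (n : ℕ) : 1 ≤ tw n := by
  cases n with
  | zero => simp [tw]
  | succ m => exact Nat.one_le_two_pow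

lemma lt_two_pow' (n : ℕ) : n < 2 ^ n := Nat.lt_two_pow_self (n := n)

lemma one_le_two_pow' (n : ℕ) : 1 ≤ 2 ^ n := Nat.one_le_two_pow

lemma pow_le_pow' {m n : ℕ} (h : m ≤ n) : 2 ^ m ≤ 2 ^ n :=
  Nat.pow_le_pow_right (by norm_num) h

lemma C2_succ (n : ℕ) : C2 (n + 1) = C2 n + 2 ^ C2 n := rfl

lemma C2_mono : Monotone C2 :=
  monotone_nat_of_le_succ fun n => by rw [C2_succ]; exact Nat.le_add_right _ _

lemma le_C2 (n : ℕ) : n ≤ C2 n := by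
  induction n with
  | zero => simp [C2]
  | succ n ih =>
    rw [C2_succ]
    have := Nat.one_le_two_pow (n := C2 n)
    omega

lemma two_pow_C2_le (n : ℕ) : 2 ^ C2 n ≤ C2 (n + 1) := by
  rw [C2_succ]; omega

lemma tw_le_C2 (n : ℕ) : tw n ≤ C2 (n + 1) := by
  induction n with
  | zero => simp [tw, C2]
  | succ n ih =>
    calc tw (n + 1) = 2 ^ tw n := rfl
      _ ≤ 2 ^ C2 (n + 1) := Nat.pow_le_pow_right (by norm_num) ih
      _ ≤ C2 (n + 2) := two_pow_C2_le _

lemma add_nine_le {x : ℕ} (h : 4 ≤ x) : x + 9 ≤ 2 ^ x := by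
  induction x, h using Nat.le_induction with
  | base => norm_num
  | succ x hx ih =>
    have h2 : 2 ^ (x + 1) = 2 ^ x + 2 ^ x := by rw [pow_succ]; ring
    omega

lemma ack4_succ (n : ℕ) : ack 4 (n + 1) = ack 3 (ack 4 n) := by
  rw [show (4 : ℕ) = 3 + 1 from rfl, ack_succ_succ]

lemma ack3_add3 (m : ℕ) : ack 3 m + 3 = 2 ^ (m + 3) := by
  rw [ack_three]
  have h : (2:ℕ) ^ 3 ≤ 2 ^ (m + 3) := Nat.pow_le_pow_right (by norm_num) (by omega)
  omega

lemma ack4_zero : ack 4 0 = 13 := by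
  rw [show (4:ℕ) = 3 + 1 from rfl, ack_succ_zero, ack_three]; norm_num

lemma ack4_le_C2 (n : ℕ) : ack 4 n + 3 ≤ C2 (n + 4) := by
  induction n with
  | zero => rw [ack4_zero]; norm_num [C2]
  | succ n ih =>
    calc ack 4 (n + 1) + 3 = 2 ^ (ack 4 n + 3) := by rw [ack4_succ, ack3_add3]
      _ ≤ 2 ^ C2 (n + 4) := Nat.pow_le_pow_right (by norm_num) ih
      _ ≤ C2 (n + 5) := two_pow_C2_le _

lemma ack4_le_tw (n : ℕ) : ack 4 n + 3 ≤ tw (n + 3) := by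
  induction n with
  | zero => rw [ack4_zero]; norm_num [tw]
  | succ n ih =>
    calc ack 4 (n + 1) + 3 = 2 ^ (ack 4 n + 3) := by rw [ack4_succ, ack3_add3]
      _ ≤ 2 ^ tw (n + 3) := Nat.pow_le_pow_right (by norm_num) ih
      _ = tw (n + 4) := rfl

lemma C4_step (m : ℕ) : C4 (m + 2) = C4 (m + 1) + 2 ^ C2 (2 ^ C4 (m + 1)) - 1 := rfl

lemma helper_sub1 {a x : ℕ} (h : 1 ≤ x) : a ≤ a + x - 1 := by omega

lemma C4_mono : Monotone C4 := by
  apply monotone_nat_of_le_succ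
  intro n
  match n with
  | 0 => norm_num [C4]
  | m + 1 =>
    show C4 (m + 1) ≤ C4 (m + 2)
    rw [C4_step]
    exact helper_sub1 Nat.one_le_two_pow

lemma eight_le_C4 (m : ℕ) : 8 ≤ C4 (m + 1) := by
  have h : C4 1 ≤ C4 (m + 1) := C4_mono (by omega)
  simpa [C4] using h

lemma two_le_two_pow {x : ℕ} (h : 1 ≤ x) : 2 ≤ 2 ^ x :=
  calc (2:ℕ) = 2 ^ 1 := rfl
    _ ≤ 2 ^ x := Nat.pow_le_pow_right (by norm_num) h

lemma helper_sub2 {m a x : ℕ} (ih : m + 7 ≤ a) (h : 2 ≤ x) : m + 8 ≤ a + x - 1 := by omega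

lemma C4_lin (m : ℕ) : m + 7 ≤ C4 (m + 1) := by
  induction m with
  | zero => norm_num [C4]
  | succ m ih =>
    show m + 8 ≤ C4 (m + 2)
    rw [C4_step]
    have h1 : 1 ≤ C2 (2 ^ C4 (m + 1)) := le_trans Nat.one_le_two_pow (le_C2 _)
    exact helper_sub2 ih (two_le_two_pow h1)

lemma le_C4 (n : ℕ) : n ≤ C4 n := by
  cases n with
  | zero => simp [C4]
  | succ m => have := C4_lin m; omega

lemma helper_C4key {a k c d q : ℕ} (h2 : a + 3 ≤ c) (h3 : c ≤ d) (h4 : d < q) :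
    a + 3 ≤ k + q - 1 := by omega

lemma C4_key (m : ℕ) : ack 4 (C4 (m + 1)) + 3 ≤ C4 (m + 2) := by
  rw [C4_step]
  have hk8 : 8 ≤ C4 (m + 1) := eight_le_C4 m
  have h1 : C4 (m + 1) + 4 ≤ 2 ^ C4 (m + 1) := le_trans (by omega) (add_nine_le (by omega))
  have h2 : ack 4 (C4 (m + 1)) + 3 ≤ C2 (C4 (m + 1) + 4) := ack4_le_C2 _
  have h3 : C2 (C4 (m + 1) + 4) ≤ C2 (2 ^ C4 (m + 1)) := C2_mono h1
  have h4 : C2 (2 ^ C4 (m + 1)) < 2 ^ C2 (2 ^ C4 (m + 1)) := lt_two_pow' _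
  exact helper_C4key h2 h3 h4

lemma C4_two : C4 2 = 8 + 2 ^ C2 256 - 1 := by
  have h := C4_step 0
  simp only [Nat.zero_add] at h
  rw [show C4 1 = 8 from rfl, show (2:ℕ) ^ (8:ℕ) = 256 by norm_num] at h
  exact h

lemma helper_base {a c q : ℕ} (h1 : a + 3 ≤ c) (h2 : c < q) : a ≤ 8 + q - 1 := by omega

lemma ack5_le_C4 (n : ℕ) : ack 5 n ≤ C4 (n + 2) := by
  induction n with
  | zero =>
    have h0 : ack 5 0 = ack 4 1 := by
      rw [show (5:ℕ) = 4 + 1 from rfl, ack_succ_zero]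
    have h1 : ack 4 1 + 3 ≤ C2 256 :=
      le_trans (ack4_le_C2 1) (C2_mono (by norm_num))
    have h3 : C2 256 < 2 ^ C2 256 := lt_two_pow' _
    show ack 5 0 ≤ C4 2
    rw [h0, C4_two]
    exact helper_base h1 h3
  | succ n ih =>
    have h1 : ack 5 (n + 1) = ack 4 (ack 5 n) := by
      rw [show (5:ℕ) = 4 + 1 from rfl, ack_succ_succ]
    have h3 : ack 4 (C4 (n + 2)) + 3 ≤ C4 (n + 3) := C4_key (n + 1)
    calc ack 5 (n + 1) = ack 4 (ack 5 n) := h1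
      _ ≤ ack 4 (C4 (n + 2)) := ack_mono_right 4 ih
      _ ≤ C4 (n + 3) := le_trans (Nat.le_add_right _ 3) h3

lemma C5_step (m : ℕ) : C5 (m + 2) = C5 (m + 1) + 2 ^ C4 (C5 (m + 1)) := rfl

lemma C5_mono : Monotone C5 := by
  apply monotone_nat_of_le_succ
  intro n
  match n with
  | 0 => norm_num [C5]
  | m + 1 =>
    show C5 (m + 1) ≤ C5 (m + 2)
    rw [C5_step]
    exact Nat.le_add_right _ _

lemma two_le_C5 (m : ℕ) : 2 ≤ C5 (m + 1) := by
  have h : C5 1 ≤ C5 (m + 1) := C5_mono (by omega)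
  simpa [C5] using h

lemma C5_step_two (m : ℕ) : C5 (m + 1) + 2 ≤ C5 (m + 2) := by
  rw [C5_step]
  have h1 : 1 ≤ C4 (C5 (m + 1)) := le_trans (by omega : 1 ≤ 2) (le_trans (two_le_C5 m) (le_C4 _))
  exact Nat.add_le_add_left (two_le_two_pow h1) _

lemma ack5_C5 (m : ℕ) : ack 5 (C5 (m + 1)) ≤ C5 (m + 3) := by
  have h1 : C5 (m + 1) + 2 ≤ C5 (m + 2) := C5_step_two m
  have h5 : C5 (m + 3) = C5 (m + 2) + 2 ^ C4 (C5 (m + 2)) := C5_step (m + 1)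
  calc ack 5 (C5 (m + 1)) ≤ C4 (C5 (m + 1) + 2) := ack5_le_C4 _
    _ ≤ C4 (C5 (m + 2)) := C4_mono h1
    _ ≤ 2 ^ C4 (C5 (m + 2)) := le_of_lt (lt_two_pow' _)
    _ ≤ C5 (m + 3) := by rw [h5]; exact Nat.le_add_left _ _

lemma ack6_le_C5 (n : ℕ) : ack 6 n ≤ C5 (2 * n + 3) := by
  induction n with
  | zero =>
    have h0 : ack 6 0 = ack 5 1 := by
      rw [show (6:ℕ) = 5 + 1 from rfl, ack_succ_zero]
    have h1 := ack5_le_C4 1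
    rw [show (1:ℕ) + 2 = 3 by norm_num] at h1
    have h2' := C5_step_two 0
    rw [show (0:ℕ) + 1 = 1 by norm_num, show (0:ℕ) + 2 = 2 by norm_num,
      show C5 1 = 2 from rfl] at h2'
    have h2 : 3 ≤ C5 2 := le_trans (by norm_num) h2'
    have h5 := C5_step 1
    rw [show (1:ℕ) + 2 = 3 by norm_num, show (1:ℕ) + 1 = 2 by norm_num] at h5
    show ack 6 0 ≤ C5 3
    rw [h0]
    calc ack 5 1 ≤ C4 3 := h1
      _ ≤ C4 (C5 2) := C4_mono h2
      _ ≤ 2 ^ C4 (C5 2) := le_of_lt (lt_two_pow' _)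
      _ ≤ C5 3 := by rw [h5]; exact Nat.le_add_left _ _
  | succ n ih =>
    have h1 : ack 6 (n + 1) = ack 5 (ack 6 n) := by
      rw [show (6:ℕ) = 5 + 1 from rfl, ack_succ_succ]
    show ack 6 (n + 1) ≤ C5 (2 * n + 2 + 3)
    calc ack 6 (n + 1) = ack 5 (ack 6 n) := h1
      _ ≤ ack 5 (C5 (2 * n + 3)) := ack_mono_right 5 ih
      _ ≤ C5 (2 * n + 2 + 3) := ack5_C5 (2 * n + 2)

lemma C7_step (m : ℕ) : C7 (m + 1) = C7 m + 2 ^ C2 (2 ^ C4 (C5 (2 ^ C7 m))) - 8 := rfl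

lemma C7_one : C7 1 = 2 ^ C2 (2 ^ C4 2) - 8 := by
  have h := C7_step 0
  simp only [Nat.zero_add] at h
  rw [show C7 0 = 0 from rfl] at h
  rw [show (2:ℕ) ^ (0:ℕ) = 1 by norm_num] at h
  rw [show C5 1 = 2 from rfl] at h
  rw [Nat.zero_add] at h
  exact h

lemma cc_le_pow (c : ℕ) : c + c ≤ 2 ^ (c + 1) := by
  have h := lt_two_pow' c
  have h2 : (2:ℕ) ^ (c + 1) = 2 ^ c + 2 ^ c := by rw [pow_succ]; ring
  omega

lemma C0_eq (m : ℕ) : C0 m = 2 ^ m := rfl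
lemma C1_eq (m : ℕ) : C1 m = 2 ^ m := rfl
lemma C3_eq (m : ℕ) : C3 m = 2 ^ m := rfl
lemma C6_eq (m : ℕ) : C6 m = 2 ^ m := rfl

lemma pow_succ2 (t : ℕ) : (2:ℕ) ^ (t + 1) = 2 ^ t + 2 ^ t := by
  rw [pow_succ, mul_two]

lemma helper_twN {N c : ℕ} (h : N + 3 ≤ c) : 2 * N + 3 ≤ c + c := by omega
lemma helper_sub8 {c p : ℕ} (h9 : c + 9 ≤ p) : c + 1 ≤ p - 8 := by omega
lemma helper_a4 {a t y : ℕ} (h1 : a + 3 ≤ t) (h2 : t + t ≤ y) (_ht : 1 ≤ t) :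
    a + 4 ≤ y := by omega
lemma helper_a6 {t q : ℕ} (h : t ≤ q) (hq : 1 ≤ q) : t + 1 ≤ 8 + q - 1 := by omega

theorem stmt_14 : C0 (C1 (C2 (C3 (C4 (C5 (C6 (C7 1))))))) > ack 6 (ack 4 (ack 4 254)) := by
  -- Step A : ack 4 254 + 4 ≤ 2 ^ C4 2
  have a1 := ack4_le_tw 254
  rw [show (254:ℕ) + 3 = 257 by norm_num] at a1
  have a2 := tw_le_C2 255
  rw [show (255:ℕ) + 1 = 256 by norm_num] at a2
  have etw6 := tw_succ 255
  rw [show (255:ℕ) + 1 = 256 by norm_num] at etw6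
  have etw7 := tw_succ 256
  rw [show (256:ℕ) + 1 = 257 by norm_num] at etw7
  have a5 : tw 256 ≤ 2 ^ C2 256 := by rw [etw6]; exact pow_le_pow' a2
  have a6 : tw 256 + 1 ≤ C4 2 := by
    rw [C4_two]; exact helper_a6 a5 (one_le_two_pow' _)
  have e := pow_succ2 (tw 256)
  have a7 : tw 257 + tw 257 ≤ 2 ^ C4 2 :=
    calc tw 257 + tw 257 = 2 ^ (tw 256 + 1) := by rw [etw7, e]
      _ ≤ 2 ^ C4 2 := pow_le_pow' a6
  have a8 : ack 4 254 + 4 ≤ 2 ^ C4 2 := helper_a4 a1 a7 (tw_pos 257)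
  -- Step B : N + 3 ≤ c  where  N = ack 4 (ack 4 254),  c = C2 (2 ^ C4 2)
  have hN : ack 4 (ack 4 254) + 3 ≤ C2 (2 ^ C4 2) :=
    le_trans (ack4_le_C2 (ack 4 254)) (C2_mono a8)
  -- Step C : 256 ≤ c
  have hc256 : 256 ≤ C2 (2 ^ C4 2) := by
    have h8 : 8 ≤ C4 2 := eight_le_C4 1
    calc (256:ℕ) = 2 ^ 8 := by norm_num
      _ ≤ 2 ^ C4 2 := pow_le_pow' h8
      _ ≤ C2 (2 ^ C4 2) := le_C2 _
  -- Step D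
  have h_c9 : C2 (2 ^ C4 2) + 9 ≤ 2 ^ C2 (2 ^ C4 2) :=
    add_nine_le (le_trans (by norm_num) hc256)
  -- Step E : 2 N + 3 ≤ 2 ^ C7 1
  have k1 : C2 (2 ^ C4 2) + 1 ≤ C7 1 := by
    rw [C7_one]; exact helper_sub8 h_c9
  have hfin1 : 2 * ack 4 (ack 4 254) + 3 ≤ 2 ^ C7 1 :=
    calc 2 * ack 4 (ack 4 254) + 3 ≤ C2 (2 ^ C4 2) + C2 (2 ^ C4 2) := helper_twN hN
      _ ≤ 2 ^ (C2 (2 ^ C4 2) + 1) := cc_le_pow _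
      _ ≤ 2 ^ C7 1 := pow_le_pow' k1
  -- Step F : ack 6 N ≤ C5 (C6 (C7 1))
  have hC6 := C6_eq (C7 1)
  have h6' : ack 6 (ack 4 (ack 4 254)) ≤ C5 (C6 (C7 1)) := by
    refine le_trans (ack6_le_C5 _) (C5_mono ?_)
    rw [hC6]; exact hfin1
  -- Step G : finish
  have t1 : C5 (C6 (C7 1)) ≤ C4 (C5 (C6 (C7 1))) := le_C4 _
  have t2 : C4 (C5 (C6 (C7 1))) < C3 (C4 (C5 (C6 (C7 1)))) := by
    rw [C3_eq]; exact lt_two_pow' _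
  have t3 : C3 (C4 (C5 (C6 (C7 1)))) ≤ C2 (C3 (C4 (C5 (C6 (C7 1))))) := le_C2 _
  have t4 : C2 (C3 (C4 (C5 (C6 (C7 1))))) ≤ C1 (C2 (C3 (C4 (C5 (C6 (C7 1)))))) := by
    rw [C1_eq]; exact le_of_lt (lt_two_pow' _)
  have t5 : C1 (C2 (C3 (C4 (C5 (C6 (C7 1)))))) ≤ C0 (C1 (C2 (C3 (C4 (C5 (C6 (C7 1))))))) := by
    rw [C0_eq]; exact le_of_lt (lt_two_pow' _)
  exact lt_of_lt_of_le (lt_of_le_of_lt (le_trans h6' t1) t2) (le_trans t3 (le_trans t4 t5))
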